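/- Let α > -1, m ≥ 1, and let λ be the smallest root of L_m^α. If q is a real polynomial of degree at most 2m-1 with ∫₀^∞ q(u) e^{-u} u^α du = 0 and q(u) ≥ 0 for all u ≥ λ, then q vanishes at every root of L_m^α and moreover q has at least one root of odd multiplicity in [λ, ∞) unless q is identically zero. -/

import Mathlib

open MeasureTheory Real Polynomial Set

section Integrals
variable {α : ℝ}

noncomputable def Ig (α : ℝ) (p : Polynomial ℝ) : ℝ :=
  ∫ u in Set.Ioi (0 : ℝ), p.eval u * Real.exp (-u) * u ^ α

lemma mono_eq (hα : -1 < α) (n : ℕ) :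
    Set.EqOn (fun u : ℝ => u ^ n * Real.exp (-u) * u ^ α)
      (fun u : ℝ => Real.exp (-u) * u ^ (α + n + 1 - 1)) (Set.Ioi 0) := by
  intro u hu
  have hu' : (0:ℝ) < u := hu
  simp only
  rw [show α + n + 1 - 1 = (n:ℝ) + α by ring, Real.rpow_add hu', Real.rpow_natCast]
  ring

lemma mono_int (hα : -1 < α) (n : ℕ) :
    IntegrableOn (fun u : ℝ => u ^ n * Real.exp (-u) * u ^ α) (Set.Ioi 0) := by
  have h : (0:ℝ) < α + n + 1 := by
    have : (0:ℝ) ≤ n := Nat.cast_nonneg n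
    linarith
  exact (Real.GammaIntegral_convergent h).congr_fun (fun u hu => (mono_eq hα n hu).symm)
    measurableSet_Ioi

lemma mono_val (hα : -1 < α) (n : ℕ) :
    ∫ u in Set.Ioi (0:ℝ), u ^ n * Real.exp (-u) * u ^ α = Real.Gamma (α + n + 1) := by
  have h : (0:ℝ) < α + n + 1 := by
    have : (0:ℝ) ≤ n := Nat.cast_nonneg n
    linarith
  rw [Real.Gamma_eq_integral h]
  exact setIntegral_congr_fun measurableSet_Ioi (mono_eq hα n)

lemma poly_int (hα : -1 < α) (p : Polynomial ℝ) :
    IntegrableOn (fun u : ℝ => p.eval u * Real.exp (-u) * u ^ α) (Set.Ioi 0) := by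
  induction p using Polynomial.induction_on' with
  | add p q hp hq =>
      exact IntegrableOn.congr_fun (hp.add hq) (fun u _ => by simp [add_mul]) measurableSet_Ioi
  | monomial k a =>
      have h2 : IntegrableOn (fun u : ℝ => a * (u ^ k * Real.exp (-u) * u ^ α)) (Set.Ioi 0) :=
        (mono_int hα k).const_mul a
      exact IntegrableOn.congr_fun h2 (fun u _ => by simp [Polynomial.eval_monomial]; ring)
        measurableSet_Ioi

end Integrals

section Integrals2
variable {α : ℝ}

lemma Ig_eq_sum (hα : -1 < α) (p : Polynomial ℝ) {N : ℕ} (hN : p.natDegree < N) :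
    Ig α p = ∑ k ∈ Finset.range N, p.coeff k * Real.Gamma (α + k + 1) := by
  have heq : Set.EqOn (fun u : ℝ => p.eval u * Real.exp (-u) * u ^ α)
      (fun u : ℝ => ∑ k ∈ Finset.range N, p.coeff k * (u ^ k * Real.exp (-u) * u ^ α))
      (Set.Ioi 0) := by
    intro u _
    simp only
    rw [Polynomial.eval_eq_sum_range' hN, Finset.sum_mul, Finset.sum_mul]
    exact Finset.sum_congr rfl fun k _ => by ring
  rw [Ig, setIntegral_congr_fun measurableSet_Ioi heq]
  rw [integral_finset_sum]
  · exact Finset.sum_congr rfl fun k _ => by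
      rw [integral_const_mul, mono_val hα k]
  · exact fun k _ => ((mono_int hα k).const_mul _)

lemma Ig_add (hα : -1 < α) (p q : Polynomial ℝ) : Ig α (p + q) = Ig α p + Ig α q := by
  have := integral_add (poly_int hα p) (poly_int hα q)
  rw [Ig, Ig, Ig, ← this]
  exact setIntegral_congr_fun measurableSet_Ioi fun u _ => by simp [add_mul]

lemma Ig_smul (hα : -1 < α) (a : ℝ) (p : Polynomial ℝ) :
    Ig α (Polynomial.C a * p) = a * Ig α p := by
  rw [Ig, Ig, ← integral_const_mul]
  exact setIntegral_congr_fun measurableSet_Ioi fun u _ => by simp; ring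

lemma Ig_neg (hα : -1 < α) (p : Polynomial ℝ) : Ig α (-p) = - Ig α p := by
  have := Ig_smul hα (-1) p
  simpa using this

lemma Ig_sum (hα : -1 < α) {ι : Type*} (s : Finset ι) (f : ι → Polynomial ℝ) :
    Ig α (∑ i ∈ s, f i) = ∑ i ∈ s, Ig α (f i) := by
  induction s using Finset.cons_induction with
  | empty => simp [Ig]
  | cons i s hi ih => rw [Finset.sum_cons, Ig_add hα, ih, Finset.sum_cons]

lemma Gamma_prod (hα : -1 < α) (N : ℕ) :
    Real.Gamma (α + 1 + N) = Real.Gamma (α + 1) * ∏ j ∈ Finset.range N, (α + 1 + j) := by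
  induction N with
  | zero => simp
  | succ n ih =>
      have hpos : (0:ℝ) < α + 1 + n := by
        have : (0:ℝ) ≤ n := Nat.cast_nonneg n
        linarith
      have : α + 1 + (n+1 : ℕ) = (α + 1 + n) + 1 := by push_cast; ring
      rw [this, Real.Gamma_add_one (ne_of_gt hpos), ih, Finset.prod_range_succ]
      ring

end Integrals2

section Combinatorics

lemma pascal_rearrange (m : ℕ) (g : ℕ → ℝ) :
    ∑ k ∈ Finset.range (m + 2), (-1 : ℝ) ^ k * ((m+1).choose k) * g k
      = ∑ k ∈ Finset.range (m + 1), (-1 : ℝ) ^ k * (m.choose k) * (g k - g (k+1)) := by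
  have hU : ∑ k ∈ Finset.range (m + 1), (-1 : ℝ) ^ k * (m.choose k) * g k
      = (∑ k ∈ Finset.range m, -((-1 : ℝ) ^ k * (m.choose (k+1)) * g (k+1))) + g 0 := by
    rw [Finset.sum_range_succ' (fun k => (-1 : ℝ) ^ k * (m.choose k) * g k) m]
    congr 1
    · exact Finset.sum_congr rfl fun k _ => by push_cast; ring
    · simp
  have hT : ∑ k ∈ Finset.range (m + 1), (-1 : ℝ) ^ k * (m.choose (k+1)) * g (k+1)
      = ∑ k ∈ Finset.range m, (-1 : ℝ) ^ k * (m.choose (k+1)) * g (k+1) := by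
    rw [Finset.sum_range_succ]
    simp
  rw [Finset.sum_range_succ' (fun k => (-1 : ℝ) ^ k * (((m+1).choose k) : ℝ) * g k) (m+1)]
  have hsplit : ∀ k, ((m+1).choose (k+1) : ℝ) = (m.choose k : ℝ) + (m.choose (k+1) : ℝ) := by
    intro k
    rw [Nat.choose_succ_succ]
    push_cast
    ring
  simp only [hsplit]
  have : ∀ k, (-1:ℝ) ^ (k+1) * ((m.choose k : ℝ) + (m.choose (k+1) : ℝ)) * g (k+1)
      = -((-1:ℝ)^k * (m.choose k) * g (k+1)) + -((-1:ℝ)^k * (m.choose (k+1)) * g (k+1)) := by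
    intro k; ring
  simp only [this, Finset.sum_add_distrib, Finset.sum_neg_distrib]
  have hsub : ∀ k, (-1:ℝ) ^ k * (m.choose k) * (g k - g (k+1))
      = (-1:ℝ)^k * (m.choose k) * g k - (-1:ℝ)^k * (m.choose k) * g (k+1) := fun k => by ring
  simp only [hsub, Finset.sum_sub_distrib]
  rw [hT, hU, Finset.sum_neg_distrib]
  simp
  ring

lemma altsum (n : ℕ) : ∀ (m : ℕ) (x : ℝ), n < m →
    ∑ k ∈ Finset.range (m + 1),
      (-1 : ℝ) ^ k * (m.choose k) * (∏ j ∈ Finset.range n, (x + k + j)) = 0 := by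
  induction n with
  | zero =>
      intro m x hm
      simp only [Finset.range_zero, Finset.prod_empty, mul_one]
      have := Int.alternating_sum_range_choose_of_ne (by omega : m ≠ 0)
      have h2 : ((∑ i ∈ Finset.range (m+1), (-1:ℤ)^i * (m.choose i) : ℤ) : ℝ) = 0 := by
        rw [this]; simp
      push_cast at h2
      convert h2 using 2
  | succ n ih =>
      intro m x hm
      obtain ⟨m', rfl⟩ : ∃ m', m = m' + 1 := ⟨m - 1, by omega⟩
      have hn : n < m' := by omega
      rw [show m' + 1 + 1 = m' + 2 from rfl,
        pascal_rearrange m' (fun k => ∏ j ∈ Finset.range (n+1), (x + k + j))]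
      have hdiff : ∀ k : ℕ, (∏ j ∈ Finset.range (n+1), (x + k + j))
          - (∏ j ∈ Finset.range (n+1), (x + (k+1:ℕ) + j))
          = -((n:ℝ)+1) * ∏ j ∈ Finset.range n, ((x+1) + k + j) := by
        intro k
        -- ∏_{j<n+1}(x+k+j) = (x+k) * ∏_{j<n}(x+k+1+j)
        have h1 : (∏ j ∈ Finset.range (n+1), (x + k + j))
            = (x + k) * ∏ j ∈ Finset.range n, (x + 1 + k + j) := by
          rw [Finset.prod_range_succ' (fun j => (x + k + j))]
          rw [mul_comm]
          congr 1
          · push_cast; ring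
          · exact Finset.prod_congr rfl fun j _ => by push_cast; ring
        -- ∏_{j<n+1}(x+(k+1)+j) = (x+k+n+1) * ∏_{j<n}(x+k+1+j)
        have h2 : (∏ j ∈ Finset.range (n+1), (x + (k+1:ℕ) + j))
            = (x + k + n + 1) * ∏ j ∈ Finset.range n, (x + 1 + k + j) := by
          rw [Finset.prod_range_succ (fun j => (x + (k+1:ℕ) + j))]
          rw [mul_comm]
          congr 1
          · push_cast; ring
          · exact Finset.prod_congr rfl fun j _ => by push_cast; ring
        rw [h1, h2]
        have : ∀ j ∈ Finset.range n, (x + 1 + k + j) = ((x+1) + k + j) := fun j _ => by ring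
        rw [Finset.prod_congr rfl this]
        ring
      simp only [hdiff]
      have : ∀ k ∈ Finset.range (m'+1), (-1:ℝ)^k * (m'.choose k) *
          (-((n:ℝ)+1) * ∏ j ∈ Finset.range n, ((x+1) + k + j))
          = (-((n:ℝ)+1)) * ((-1:ℝ)^k * (m'.choose k) * ∏ j ∈ Finset.range n, ((x+1) + k + j)) :=
        fun k _ => by ring
      rw [Finset.sum_congr rfl this, ← Finset.mul_sum, ih m' (x+1) hn, mul_zero]

end Combinatorics

/-- The generalized Laguerre polynomial `L_m^α`. -/
noncomputable def laguerre (α : ℝ) (m : ℕ) : Polynomial ℝ :=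
  ∑ k ∈ Finset.range (m + 1),
    Polynomial.C ((-1 : ℝ) ^ k / (Nat.factorial k) *
      (∏ j ∈ Finset.range (m - k), (α + k + 1 + j)) / (Nat.factorial (m - k))) *
      Polynomial.X ^ k

noncomputable def lagC (α : ℝ) (m k : ℕ) : ℝ :=
  (-1 : ℝ) ^ k / (Nat.factorial k) *
      (∏ j ∈ Finset.range (m - k), (α + k + 1 + j)) / (Nat.factorial (m - k))

section Laguerre
variable {α : ℝ} {m : ℕ}

lemma lag_coeff (α : ℝ) (m k : ℕ) (hk : k < m + 1) :
    (laguerre α m).coeff k = lagC α m k := by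
  rw [laguerre, Polynomial.finset_sum_coeff]
  rw [Finset.sum_eq_single k]
  · simp [lagC, Polynomial.coeff_C_mul, Polynomial.coeff_X_pow]
  · intro b _ hb
    simp [Polynomial.coeff_C_mul, Polynomial.coeff_X_pow, (Ne.symm hb)]
  · intro h
    exact absurd (Finset.mem_range.mpr hk) h

lemma lag_natDegree_le (α : ℝ) (m : ℕ) : (laguerre α m).natDegree ≤ m := by
  rw [laguerre]
  refine (Polynomial.natDegree_sum_le _ _).trans ?_
  rw [Finset.fold_max_le]
  constructor
  · exact Nat.zero_le m
  · intro k hk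
    refine (Polynomial.natDegree_C_mul_le _ _).trans ?_
    rw [Polynomial.natDegree_X_pow]
    exact Nat.lt_succ_iff.mp (Finset.mem_range.mp hk)

lemma lag_coeff_top (α : ℝ) (m : ℕ) : (laguerre α m).coeff m = (-1:ℝ)^m / m.factorial := by
  rw [lag_coeff α m m (Nat.lt_succ_self m), lagC]
  simp

lemma lag_coeff_top_ne (α : ℝ) (m : ℕ) : (laguerre α m).coeff m ≠ 0 := by
  rw [lag_coeff_top]
  have h1 : ((-1:ℝ))^m ≠ 0 := by
    simp
  have h2 : (m.factorial : ℝ) ≠ 0 := Nat.cast_ne_zero.mpr m.factorial_ne_zero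
  exact div_ne_zero h1 h2

lemma lag_ne_zero (α : ℝ) (m : ℕ) : laguerre α m ≠ 0 := fun h => by
  have := lag_coeff_top_ne α m
  rw [h] at this
  simp at this

lemma lag_natDegree (α : ℝ) (m : ℕ) : (laguerre α m).natDegree = m :=
  le_antisymm (lag_natDegree_le α m) (Polynomial.le_natDegree_of_ne_zero (lag_coeff_top_ne α m))

end Laguerre

section Orth
variable {α : ℝ}

lemma orth (hα : -1 < α) {m n : ℕ} (hn : n < m) :
    Ig α (Polynomial.X ^ n * laguerre α m) = 0 := by
  have hdeg : (Polynomial.X ^ n * laguerre α m).natDegree < n + (m + 1) := by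
    refine lt_of_le_of_lt (Polynomial.natDegree_mul_le) ?_
    rw [Polynomial.natDegree_X_pow]
    have := lag_natDegree_le α m
    omega
  rw [Ig_eq_sum hα _ hdeg, Finset.sum_range_add]
  have h1 : ∀ i ∈ Finset.range n,
      (Polynomial.X ^ n * laguerre α m).coeff i * Real.Gamma (α + i + 1) = 0 := by
    intro i hi
    rw [mul_comm (Polynomial.X ^ n : Polynomial ℝ), Polynomial.coeff_mul_X_pow',
      if_neg (by exact not_le.mpr (Finset.mem_range.mp hi))]
    simp
  rw [Finset.sum_eq_zero h1, zero_add]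
  have h2 : ∀ i ∈ Finset.range (m+1),
      (Polynomial.X ^ n * laguerre α m).coeff (n + i) * Real.Gamma (α + (n+i : ℕ) + 1)
      = (Real.Gamma (α+1) * (∏ j ∈ Finset.range m, (α + 1 + j)) / m.factorial) *
        ((-1:ℝ)^i * (m.choose i) * ∏ j ∈ Finset.range n, (α + 1 + i + j)) := by
    intro i hi
    have hi' : i ≤ m := Nat.lt_succ_iff.mp (Finset.mem_range.mp hi)
    have hcoeff : (Polynomial.X ^ n * laguerre α m).coeff (n + i) = lagC α m i := by
      rw [add_comm n i, Polynomial.coeff_X_pow_mul, lag_coeff α m i (by omega)]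
    have hGamma : Real.Gamma (α + (n+i : ℕ) + 1)
        = Real.Gamma (α + 1) * ((∏ j ∈ Finset.range i, (α + 1 + j)) *
            ∏ j ∈ Finset.range n, (α + 1 + i + j)) := by
      rw [show α + (n+i : ℕ) + 1 = α + 1 + (n+i : ℕ) by push_cast; ring,
        Gamma_prod hα (n+i)]
      congr 1
      rw [show n + i = i + n by omega, Finset.prod_range_add]
      congr 1
      exact Finset.prod_congr rfl fun j _ => by push_cast; ring
    have hclaim1 : (∏ j ∈ Finset.range (m - i), (α + i + 1 + j)) *
        ∏ j ∈ Finset.range i, (α + 1 + j) = ∏ j ∈ Finset.range m, (α + 1 + j) := by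
      rw [mul_comm, show m = i + (m - i) by omega, Finset.prod_range_add]
      congr 1
      exact Finset.prod_congr (by rw [show i + (m - i) - i = m - i by omega])
        fun j _ => by push_cast; ring
    rw [hcoeff, hGamma, lagC, Nat.cast_choose ℝ hi']
    have hf1 : (i.factorial : ℝ) ≠ 0 := Nat.cast_ne_zero.mpr i.factorial_ne_zero
    have hf2 : ((m-i).factorial : ℝ) ≠ 0 := Nat.cast_ne_zero.mpr (m-i).factorial_ne_zero
    have hf3 : (m.factorial : ℝ) ≠ 0 := Nat.cast_ne_zero.mpr m.factorial_ne_zero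
    rw [← hclaim1]
    field_simp
  rw [Finset.sum_congr rfl h2, ← Finset.mul_sum]
  rw [altsum n m (α+1) hn, mul_zero]

end Orth

section Analysis
variable {α : ℝ}

lemma Ig_pos (hα : -1 < α) {f : Polynomial ℝ} (hf : f ≠ 0)
    (hpos : ∀ u : ℝ, 0 < u → 0 ≤ f.eval u) : 0 < Ig α f := by
  set F : ℝ → ℝ := fun u => f.eval u * Real.exp (-u) * u ^ α with hF
  have hnn : ∀ᵐ u ∂(volume.restrict (Set.Ioi 0)), 0 ≤ F u := by
    rw [ae_restrict_iff' measurableSet_Ioi]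
    refine Filter.Eventually.of_forall fun u hu => ?_
    have hu' : (0:ℝ) < u := hu
    have := Real.rpow_pos_of_pos hu' α
    have := Real.exp_pos (-u)
    have := hpos u hu'
    positivity
  have hint : Integrable F (volume.restrict (Set.Ioi 0)) := poly_int hα f
  rw [Ig, show (∫ u in Set.Ioi (0:ℝ), f.eval u * Real.exp (-u) * u ^ α) =
    ∫ u, F u ∂(volume.restrict (Set.Ioi 0)) from rfl]
  rw [integral_pos_iff_support_of_nonneg_ae hnn hint]
  have hsub : (Set.Ioi 0 \ {x | f.IsRoot x}) ⊆ Function.support F := by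
    intro u hu
    obtain ⟨hu1, hu2⟩ := hu
    have hu' : (0:ℝ) < u := hu1
    have h1 : f.eval u ≠ 0 := hu2
    have h2 : Real.exp (-u) ≠ 0 := (Real.exp_pos _).ne'
    have h3 : u ^ α ≠ 0 := (Real.rpow_pos_of_pos hu' α).ne'
    exact mul_ne_zero (mul_ne_zero h1 h2) h3
  refine lt_of_lt_of_le ?_ (measure_mono hsub)
  rw [Measure.restrict_apply' measurableSet_Ioi]
  have hroots : volume {x : ℝ | f.IsRoot x} = 0 :=
    (Polynomial.finite_setOf_isRoot hf).measure_zero volume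
  rw [Set.inter_eq_left.mpr Set.diff_subset, measure_diff_null hroots]
  simp [Real.volume_Ioi]

lemma exists_odd_root {f : Polynomial ℝ} {a b : ℝ} (hab : a < b)
    (ha : f.eval a < 0) (hb : 0 < f.eval b) :
    ∃ c, a < c ∧ c < b ∧ Odd (f.rootMultiplicity c) := by
  have hf : f ≠ 0 := fun h => by simp [h] at hb
  set S := {x : ℝ | x ∈ Set.Icc a b ∧ 0 < f.eval x} with hS
  have hbS : b ∈ S := ⟨⟨le_of_lt hab, le_refl b⟩, hb⟩
  have hne : S.Nonempty := ⟨b, hbS⟩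
  have hbdd : BddBelow S := ⟨a, fun x hx => hx.1.1⟩
  set c := sInf S with hc
  have hcicc : c ∈ Set.Icc a b := by
    constructor
    · exact le_csInf hne fun x hx => hx.1.1
    · exact csInf_le hbdd hbS |>.trans (le_refl b)
  have hcge : 0 ≤ f.eval c := by
    have hclos : c ∈ closure S := csInf_mem_closure hne hbdd
    have : closure S ⊆ {x : ℝ | 0 ≤ f.eval x} := by
      refine closure_minimal (fun x hx => le_of_lt hx.2)
        (isClosed_le continuous_const f.continuous)
    exact this hclos
  have hneg : ∀ x, a ≤ x → x < c → f.eval x ≤ 0 := by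
    intro x hax hxc
    by_contra hpos
    push_neg at hpos
    have hxb : x ≤ b := le_trans (le_of_lt hxc) hcicc.2
    have : x ∈ S := ⟨⟨hax, hxb⟩, hpos⟩
    exact absurd (csInf_le hbdd this) (not_le.mpr hxc)
  have hac : a < c := by
    rcases lt_or_eq_of_le hcicc.1 with h | h
    · exact h
    · exact absurd hcge (by rw [← h]; exact not_le.mpr ha)
  have hcle : f.eval c ≤ 0 := by
    have htend : Filter.Tendsto (fun x => f.eval x) (nhdsWithin c (Set.Iio c)) (nhds (f.eval c)) :=
      (f.continuous.tendsto c).mono_left nhdsWithin_le_nhds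
    refine le_of_tendsto htend ?_
    filter_upwards [Ioo_mem_nhdsLT hac] with x hx
    exact hneg x (le_of_lt hx.1) hx.2
  have hc0 : f.eval c = 0 := le_antisymm hcle hcge
  have hcb : c < b := by
    rcases lt_or_eq_of_le hcicc.2 with h | h
    · exact h
    · rw [h] at hc0; exact absurd hc0 (ne_of_gt hb)
  -- factor out the root
  set e := f.rootMultiplicity c with he
  set g := f /ₘ (Polynomial.X - Polynomial.C c) ^ e with hg
  have hfact : (Polynomial.X - Polynomial.C c) ^ e * g = f :=
    Polynomial.pow_mul_divByMonic_rootMultiplicity_eq f c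
  have hgc : g.eval c ≠ 0 := Polynomial.eval_divByMonic_pow_rootMultiplicity_ne_zero c hf
  have hgcont : ContinuousAt g.eval c := g.continuous.continuousAt
  rcases lt_or_gt_of_ne hgc with hneg' | hpos'
  · -- g(c) < 0 : contradiction with points of S just right of c
    exfalso
    have hev : ∀ᶠ x in nhds c, g.eval x < 0 := hgcont.eventually_lt_const hneg'
    rcases Metric.eventually_nhds_iff.mp hev with ⟨δ, hδ, hball⟩
    obtain ⟨x, hxS, hxlt⟩ := exists_lt_of_csInf_lt hne (lt_add_of_pos_right c hδ)
    have hcx : c ≤ x := csInf_le hbdd hxS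
    have hxc : c < x := by
      rcases lt_or_eq_of_le hcx with h | h
      · exact h
      · exfalso; rw [← h] at hxS; exact absurd hc0 (ne_of_gt hxS.2)
    have hgx : g.eval x < 0 := hball (by rw [Real.dist_eq, abs_of_pos (by linarith)]; linarith)
    have hfx : 0 < f.eval x := hxS.2
    rw [← hfact] at hfx
    simp only [Polynomial.eval_mul, Polynomial.eval_pow, Polynomial.eval_sub,
      Polynomial.eval_X, Polynomial.eval_C] at hfx
    have hxpow : 0 < (x - c) ^ e := pow_pos (by linarith) e
    nlinarith
  · -- g(c) > 0 : pick x < c near c with f(x) < 0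
    have hev : ∀ᶠ x in nhds c, 0 < g.eval x := hgcont.eventually_const_lt hpos'
    rcases Metric.eventually_nhds_iff.mp hev with ⟨δ, hδ, hball⟩
    -- pick x in (max a (c - δ), c) avoiding roots of f
    have hlt : max a (c - δ) < c := max_lt hac (by linarith)
    have hioo : (Set.Ioo (max a (c - δ)) c).Infinite := Set.Ioo_infinite hlt
    have hfin : (Set.Ioo (max a (c - δ)) c \ {x | f.IsRoot x}).Nonempty :=
      (hioo.diff (Polynomial.finite_setOf_isRoot hf)).nonempty
    obtain ⟨x, hx1, hx2⟩ := hfin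
    have hxa : a ≤ x := le_of_lt (lt_of_le_of_lt (le_max_left _ _) hx1.1)
    have hxc : x < c := hx1.2
    have hfx : f.eval x < 0 :=
      lt_of_le_of_ne (hneg x hxa hxc) (fun h => hx2 h)
    have hgx : 0 < g.eval x := by
      refine hball ?_
      rw [Real.dist_eq, abs_of_neg (by linarith)]
      have := lt_of_le_of_lt (le_max_right a (c - δ)) hx1.1
      linarith
    rw [← hfact] at hfx
    simp only [Polynomial.eval_mul, Polynomial.eval_pow, Polynomial.eval_sub,
      Polynomial.eval_X, Polynomial.eval_C] at hfx
    -- (x - c)^e < 0, so e is odd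
    have hxe : (x - c) ^ e < 0 := by nlinarith
    refine ⟨c, hac, hcb, ?_⟩
    rcases Nat.even_or_odd e with hE | hO
    · exact absurd (hE.pow_nonneg (x - c)) (not_le.mpr hxe)
    · exact hO

end Analysis

section RootMult

lemma rm_neg (f : Polynomial ℝ) (c : ℝ) : (-f).rootMultiplicity c = f.rootMultiplicity c := by
  rcases eq_or_ne f 0 with rfl | hf
  · simp
  · have h : (Polynomial.C (-1:ℝ)) * f ≠ 0 := by
      simp [hf]
    have e : -f = Polynomial.C (-1:ℝ) * f := by
      rw [Polynomial.C_neg, Polynomial.C_1, neg_one_mul]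
    rw [e, Polynomial.rootMultiplicity_mul h, Polynomial.rootMultiplicity_C]
    simp

lemma rm_prod (s : Finset ℝ) (c : ℝ) :
    (∏ t ∈ s, (Polynomial.X - Polynomial.C t)).rootMultiplicity c
      = if c ∈ s then 1 else 0 := by
  induction s using Finset.cons_induction with
  | empty =>
      simp only [Finset.prod_empty, Finset.notMem_empty, if_false]
      exact Polynomial.rootMultiplicity_eq_zero (by simp [Polynomial.IsRoot])
  | cons t s ht ih =>
      rw [Finset.prod_cons]
      have hne : (Polynomial.X - Polynomial.C t) *
          (∏ u ∈ s, (Polynomial.X - Polynomial.C u)) ≠ 0 := by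
        refine mul_ne_zero (Polynomial.X_sub_C_ne_zero t) ?_
        exact (Polynomial.monic_prod_of_monic s _ fun u _ => Polynomial.monic_X_sub_C u).ne_zero
      rw [Polynomial.rootMultiplicity_mul hne, Polynomial.rootMultiplicity_X_sub_C, ih]
      by_cases h1 : c = t
      · subst h1
        have : c ∉ s := ht
        simp [Finset.mem_cons, this]
      · simp [Finset.mem_cons, h1]

lemma prod_sq_natdeg (s : Finset ℝ) :
    (∏ t ∈ s, (Polynomial.X - Polynomial.C t) ^ 2).natDegree = 2 * s.card := by
  rw [Polynomial.natDegree_prod _ _ (fun t _ => pow_ne_zero 2 (Polynomial.X_sub_C_ne_zero t))]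
  rw [Finset.sum_congr rfl fun t _ => by
    rw [Polynomial.natDegree_pow, Polynomial.natDegree_X_sub_C]]
  simp [Finset.sum_const, mul_comm]

end RootMult

section ConstSign

lemma const_sign {f : Polynomial ℝ} (hf : f ≠ 0)
    (h : ∀ c : ℝ, 0 < c → ¬ Odd (f.rootMultiplicity c)) :
    (∀ x : ℝ, 0 < x → 0 ≤ f.eval x) ∨ (∀ x : ℝ, 0 < x → f.eval x ≤ 0) := by
  by_contra hcon
  push_neg at hcon
  obtain ⟨⟨b, hb, hbneg'⟩, ⟨a, ha, hapos'⟩⟩ := hcon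
  rcases lt_trichotomy a b with hab | rfl | hba
  · -- f(a) > 0, f(b) < 0 : apply to -f
    have h1 : (-f).eval a < 0 := by simp [hapos']
    have h2 : 0 < (-f).eval b := by simp [hbneg']
    obtain ⟨c, hc1, hc2, hc3⟩ := exists_odd_root hab h1 h2
    rw [rm_neg] at hc3
    exact h c (lt_trans ha hc1) hc3
  · linarith
  · obtain ⟨c, hc1, hc2, hc3⟩ := exists_odd_root hba hbneg' hapos'
    exact h c (lt_trans hb hc1) hc3

end ConstSign

section Roots
variable {α : ℝ}

lemma orth' (hα : -1 < α) {m : ℕ} {s : Polynomial ℝ} (hs : s.natDegree < m) :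
    Ig α (laguerre α m * s) = 0 := by
  conv_lhs => rw [s.as_sum_range_C_mul_X_pow]
  rw [Finset.mul_sum, Ig_sum hα]
  refine Finset.sum_eq_zero fun j hj => ?_
  have hj' : j < m := lt_of_lt_of_le (Finset.mem_range.mp hj) (Nat.succ_le_of_lt hs)
  have : laguerre α m * (Polynomial.C (s.coeff j) * Polynomial.X ^ j)
      = Polynomial.C (s.coeff j) * (Polynomial.X ^ j * laguerre α m) := by ring
  rw [this, Ig_smul hα, orth hα hj', mul_zero]

lemma lag_roots (hα : -1 < α) {m : ℕ} (hm : 1 ≤ m) :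
    ∃ T : Finset ℝ, T.card = m ∧ (∀ t ∈ T, 0 < t) ∧
      (∀ t : ℝ, (laguerre α m).IsRoot t ↔ t ∈ T) ∧
      laguerre α m = Polynomial.C (laguerre α m).leadingCoeff *
        ∏ t ∈ T, (Polynomial.X - Polynomial.C t) := by
  classical
  set L := laguerre α m with hLdef
  have hL0 : L ≠ 0 := lag_ne_zero α m
  set T : Finset ℝ := L.roots.toFinset.filter
    (fun t => Odd (L.rootMultiplicity t) ∧ 0 < t) with hT
  have hTpos : ∀ t ∈ T, 0 < t := fun t ht => (Finset.mem_filter.mp ht).2.2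
  -- m ≤ T.card
  have hcard : m ≤ T.card := by
    by_contra hlt
    push_neg at hlt
    set P : Polynomial ℝ := ∏ t ∈ T, (Polynomial.X - Polynomial.C t) with hP
    have hPmonic : P.Monic := Polynomial.monic_prod_of_monic _ _
      fun t _ => Polynomial.monic_X_sub_C t
    have hP0 : P ≠ 0 := hPmonic.ne_zero
    have hPdeg : P.natDegree = T.card := by
      rw [hP, Polynomial.natDegree_prod _ _
        (fun t _ => Polynomial.X_sub_C_ne_zero t)]
      simp [Polynomial.natDegree_X_sub_C]
    have hf0 : L * P ≠ 0 := mul_ne_zero hL0 hP0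
    have hodd : ∀ c : ℝ, 0 < c → ¬ Odd ((L * P).rootMultiplicity c) := by
      intro c hc
      rw [Polynomial.rootMultiplicity_mul hf0, hP, rm_prod]
      by_cases hcT : c ∈ T
      · have : Odd (L.rootMultiplicity c) := (Finset.mem_filter.mp hcT).2.1
        simp only [hcT, if_true]
        rw [Nat.not_odd_iff_even]
        exact this.add_one
      · have heven : Even (L.rootMultiplicity c) := by
          rw [← Nat.not_odd_iff_even]
          intro hoddL
          have hpos : 0 < L.rootMultiplicity c := Nat.pos_of_ne_zero (by
            intro h; rw [h] at hoddL; simp at hoddL)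
          have hroot : L.IsRoot c := (Polynomial.rootMultiplicity_pos hL0).mp hpos
          exact hcT (Finset.mem_filter.mpr
            ⟨Multiset.mem_toFinset.mpr ((Polynomial.mem_roots hL0).mpr hroot), hoddL, hc⟩)
        simp only [hcT, if_false, add_zero]
        rw [Nat.not_odd_iff_even]
        exact heven
    have hIg : Ig α (L * P) = 0 := orth' hα (by rw [hPdeg]; exact hlt)
    rcases const_sign hf0 hodd with hs | hs
    · have := Ig_pos hα hf0 (fun u hu => hs u hu)
      rw [hIg] at this
      exact lt_irrefl 0 this
    · have hneg0 : (-(L * P)) ≠ 0 := neg_ne_zero.mpr hf0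
      have := Ig_pos hα hneg0 (fun u hu => by
        rw [Polynomial.eval_neg]
        exact neg_nonneg.mpr (hs u hu))
      rw [Ig_neg hα, hIg, neg_zero] at this
      exact lt_irrefl 0 this
  -- now T.card = m and roots are nodup
  have h1 : T.card ≤ L.roots.toFinset.card := Finset.card_le_card (Finset.filter_subset _ _)
  have h2 : L.roots.toFinset.card ≤ Multiset.card L.roots := Multiset.toFinset_card_le _
  have h3 : Multiset.card L.roots ≤ L.natDegree := Polynomial.card_roots' L
  have h4 : L.natDegree = m := lag_natDegree α m
  have hTcard : T.card = m := le_antisymm (by omega) hcard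
  have hrootscard : Multiset.card L.roots = m := by omega
  have hnodup : L.roots.Nodup := by
    rw [← Multiset.toFinset_card_eq_card_iff_nodup]
    omega
  have hTfin : T = L.roots.toFinset := by
    refine Finset.eq_of_subset_of_card_le (Finset.filter_subset _ _) ?_
    omega
  have hval : L.roots.toFinset.val = L.roots := by
    rw [Multiset.toFinset_val, Multiset.dedup_eq_self.mpr hnodup]
  have hiff : ∀ t : ℝ, L.IsRoot t ↔ t ∈ T := by
    intro t
    rw [hTfin, Multiset.mem_toFinset, Polynomial.mem_roots hL0]
  have hfact : L = Polynomial.C L.leadingCoeff * ∏ t ∈ T, (Polynomial.X - Polynomial.C t) := by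
    have := Polynomial.C_leadingCoeff_mul_prod_multiset_X_sub_C
      (p := L) (by rw [hrootscard, h4])
    rw [Finset.prod_eq_multiset_prod, hTfin, hval]
    exact this.symm
  exact ⟨T, hTcard, hTpos, hiff, hfact⟩

end Roots

theorem quadrature_vanishing_and_odd_root
    (α : ℝ) (hα : -1 < α) (m : ℕ) (hm : 1 ≤ m)
    (lam : ℝ) (hroot : (laguerre α m).IsRoot lam)
    (hmin : ∀ t, (laguerre α m).IsRoot t → lam ≤ t)
    (q : Polynomial ℝ) (hdeg : q.natDegree ≤ 2 * m - 1)
    (hint : (∫ u in Set.Ioi (0 : ℝ), q.eval u * Real.exp (-u) * u ^ α) = 0)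
    (hsign : ∀ u : ℝ, lam ≤ u → 0 ≤ q.eval u) :
    (∀ t, (laguerre α m).IsRoot t → q.eval t = 0) ∧
    (q ≠ 0 → ∃ t, lam ≤ t ∧ Odd (Polynomial.rootMultiplicity t q)) := by
  classical
  obtain ⟨T, hTcard, hTpos, hiff, hfact⟩ := lag_roots hα hm
  have hIq : Ig α q = 0 := hint
  have hlam_le : ∀ t ∈ T, lam ≤ t := fun t ht => hmin t ((hiff t).mpr ht)
  have hqnodes : ∀ t ∈ T, 0 ≤ q.eval t := fun t ht => hsign t (hlam_le t ht)
  set L := laguerre α m with hLdef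
  have hL0 : L ≠ 0 := lag_ne_zero α m
  -- Lagrange-type basis
  set ell : ℝ → Polynomial ℝ :=
    fun t => ∏ s ∈ T.erase t, (Polynomial.C (t - s)⁻¹ * (Polynomial.X - Polynomial.C s))
    with hell
  have hell_self : ∀ t ∈ T, (ell t).eval t = 1 := by
    intro t ht
    rw [hell]
    simp only [Polynomial.eval_prod, Polynomial.eval_mul, Polynomial.eval_C,
      Polynomial.eval_sub, Polynomial.eval_X]
    refine Finset.prod_eq_one fun s hs => ?_
    have hst : s ≠ t := Finset.ne_of_mem_erase hs
    have : t - s ≠ 0 := sub_ne_zero_of_ne (Ne.symm hst)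
    field_simp
  have hell_other : ∀ t ∈ T, ∀ s ∈ T, s ≠ t → (ell t).eval s = 0 := by
    intro t ht s hs hst
    rw [hell]
    simp only [Polynomial.eval_prod]
    refine Finset.prod_eq_zero (Finset.mem_erase.mpr ⟨hst, hs⟩) ?_
    simp
  have hell_deg : ∀ t ∈ T, (ell t).natDegree ≤ m - 1 := by
    intro t ht
    rw [hell]
    refine (Polynomial.natDegree_prod_le _ _).trans ?_
    have : ∀ s ∈ T.erase t,
        (Polynomial.C (t - s)⁻¹ * (Polynomial.X - Polynomial.C s)).natDegree ≤ 1 := by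
      intro s _
      exact (Polynomial.natDegree_C_mul_le _ _).trans (by rw [Polynomial.natDegree_X_sub_C])
    refine (Finset.sum_le_sum this).trans ?_
    rw [Finset.sum_const, smul_eq_mul, mul_one, Finset.card_erase_of_mem ht, hTcard]
  -- the auxiliary polynomial h
  set S : Polynomial ℝ := ∑ t ∈ T, Polynomial.C (q.eval t) * (ell t) ^ 2 with hSdef
  set h : Polynomial ℝ := q - S with hhdef
  have hheval : ∀ s ∈ T, h.eval s = 0 := by
    intro s hs
    rw [hhdef, Polynomial.eval_sub, hSdef, Polynomial.eval_finset_sum]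
    have : ∀ t ∈ T, t ≠ s → (Polynomial.C (q.eval t) * (ell t) ^ 2).eval s = 0 := by
      intro t ht hts
      simp [Polynomial.eval_pow, hell_other t ht s hs (Ne.symm hts)]
    rw [Finset.sum_eq_single s (fun t ht hts => this t ht hts) (fun hns => absurd hs hns)]
    simp [hell_self s hs]
  have hhdeg : h.natDegree ≤ 2 * m - 1 := by
    rw [hhdef]
    refine (Polynomial.natDegree_sub_le _ _).trans ?_
    rw [max_le_iff]
    refine ⟨hdeg, ?_⟩
    rw [hSdef]
    refine (Polynomial.natDegree_sum_le _ _).trans ?_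
    rw [Finset.fold_max_le]
    refine ⟨Nat.zero_le _, fun t ht => ?_⟩
    refine (Polynomial.natDegree_C_mul_le _ _).trans ?_
    refine (Polynomial.natDegree_pow _ _).le.trans ?_
    have := hell_deg t ht
    omega
  -- divisibility by the node polynomial
  set Pi : Polynomial ℝ := ∏ t ∈ T, (Polynomial.X - Polynomial.C t) with hPidef
  have hPimonic : Pi.Monic := Polynomial.monic_prod_of_monic _ _
    fun t _ => Polynomial.monic_X_sub_C t
  have hPideg : Pi.natDegree = m := by
    rw [hPidef, Polynomial.natDegree_prod _ _ (fun t _ => Polynomial.X_sub_C_ne_zero t)]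
    simp [Polynomial.natDegree_X_sub_C, hTcard]
  have hdvd : Pi ∣ h := by
    rcases eq_or_ne h 0 with hh0 | hh0
    · rw [hh0]; exact dvd_zero Pi
    · have hle : T.val ≤ h.roots := by
        rw [Multiset.le_iff_count]
        intro t
        by_cases htT : t ∈ T
        · rw [Multiset.count_eq_one_of_mem T.nodup htT, Polynomial.count_roots]
          exact (Polynomial.rootMultiplicity_pos hh0).mpr (hheval t htT)
        · rw [Multiset.count_eq_zero_of_notMem (by simpa using htT)]
          exact Nat.zero_le _
      calc Pi = (T.val.map fun t => Polynomial.X - Polynomial.C t).prod :=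
            Finset.prod_eq_multiset_prod _ _
        _ ∣ (h.roots.map fun t => Polynomial.X - Polynomial.C t).prod :=
            Multiset.prod_dvd_prod_of_le (Multiset.map_le_map hle)
        _ ∣ h := Polynomial.prod_multiset_X_sub_C_dvd h
  -- Ig α h = 0
  have hlc : L.leadingCoeff ≠ 0 := Polynomial.leadingCoeff_ne_zero.mpr hL0
  set lc := L.leadingCoeff with hlcdef
  have hPiL : Pi = Polynomial.C lc⁻¹ * L := by
    rw [hfact, ← mul_assoc, ← Polynomial.C_mul, inv_mul_cancel₀ hlc, Polynomial.C_1, one_mul]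
  have hIh : Ig α h = 0 := by
    obtain ⟨s, hs⟩ := hdvd
    rcases eq_or_ne s 0 with hs0 | hs0
    · rw [hs, hs0, mul_zero]
      simp [Ig]
    · have hPi0 : Pi ≠ 0 := hPimonic.ne_zero
      have hdegs : s.natDegree < m := by
        have := Polynomial.natDegree_mul hPi0 hs0
        rw [← hs] at this
        omega
      rw [hs, hPiL, mul_assoc, Ig_smul hα, orth' hα hdegs, mul_zero]
  -- quadrature positivity
  have hq_at_nodes : ∀ t ∈ T, q.eval t = 0 := by
    have hIS : Ig α S = ∑ t ∈ T, q.eval t * Ig α ((ell t) ^ 2) := by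
      rw [hSdef, Ig_sum hα]
      exact Finset.sum_congr rfl fun t _ => Ig_smul hα _ _
    have hqhS : Ig α q = Ig α h + Ig α S := by
      rw [← Ig_add hα, hhdef]
      congr 1
      ring
    have hsum0 : ∑ t ∈ T, q.eval t * Ig α ((ell t) ^ 2) = 0 := by
      rw [← hIS]
      have := hqhS
      rw [hIq, hIh] at this
      linarith
    have hterm : ∀ t ∈ T, 0 ≤ q.eval t * Ig α ((ell t) ^ 2) := by
      intro t ht
      have hellne : ell t ≠ 0 := fun hz => by
        have := hell_self t ht
        rw [hz] at this
        simp at this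
      have hpos : 0 < Ig α ((ell t) ^ 2) := by
        refine Ig_pos hα (pow_ne_zero 2 hellne) fun u _ => ?_
        rw [Polynomial.eval_pow]
        exact sq_nonneg _
      exact mul_nonneg (hqnodes t ht) (le_of_lt hpos)
    intro t ht
    have := (Finset.sum_eq_zero_iff_of_nonneg hterm).mp hsum0 t ht
    have hellne : ell t ≠ 0 := fun hz => by
      have := hell_self t ht
      rw [hz] at this
      simp at this
    have hpos : 0 < Ig α ((ell t) ^ 2) := by
      refine Ig_pos hα (pow_ne_zero 2 hellne) fun u _ => ?_
      rw [Polynomial.eval_pow]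
      exact sq_nonneg _
    rcases mul_eq_zero.mp this with h1 | h2
    · exact h1
    · exact absurd h2 (ne_of_gt hpos)
  constructor
  · exact fun t ht => hq_at_nodes t ((hiff t).mp ht)
  · intro hq
    by_contra hno
    push_neg at hno
    have hdvd2 : (∏ t ∈ T, (Polynomial.X - Polynomial.C t) ^ 2) ∣ q := by
      refine Finset.prod_dvd_of_coprime ?_ ?_
      · intro t ht s hs hts
        exact (Polynomial.isCoprime_X_sub_C_of_isUnit_sub
          ((sub_ne_zero_of_ne hts).isUnit)).pow
      · intro t ht
        have hroot : q.IsRoot t := hq_at_nodes t ht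
        have hpos : 0 < q.rootMultiplicity t := (Polynomial.rootMultiplicity_pos hq).mpr hroot
        have heven : Even (q.rootMultiplicity t) := by
          rw [← Nat.not_odd_iff_even]
          exact hno t (hlam_le t ht)
        have h2le : 2 ≤ q.rootMultiplicity t := by
          obtain ⟨r, hr⟩ := heven
          omega
        calc (Polynomial.X - Polynomial.C t) ^ 2
            ∣ (Polynomial.X - Polynomial.C t) ^ (q.rootMultiplicity t) := pow_dvd_pow _ h2le
          _ ∣ q := Polynomial.pow_rootMultiplicity_dvd q t
    have hdeg2 : 2 * m ≤ q.natDegree := by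
      have := Polynomial.natDegree_le_of_dvd hdvd2 hq
      rw [prod_sq_natdeg, hTcard] at this
      exact this
    omega
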